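/- Let ν ∈ E_ε be written as a sequence of primary particles ((l₁,c₁),…,(l_s,c_s)) with I indexing upper halves of the secondary particles (so l_i = l_{i+1} + ε(c_i,c_{i+1}) for i ∈ I), I+1 indexing lower halves, and J indexing the primary particles of ν, I, I+1, J forming a set-partition of {1,…,s}. Define ψ(j,i) = l_j − l_i − Δ(j,i) on J × I. Then ψ is strictly decreasing in its first argument on J and non-decreasing in its second argument on I: for all j < j' in J and i ∈ I, ψ(j,i) > ψ(j',i), and for all j ∈ J and i < i' in I, ψ(j,i) ≤ ψ(j,i'). -/

import Mathlib

open Finset in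
/-- The formal energy of transfer `Δ(k,k')` along the state sequence `c`:
`Δ(k,k') = Σ_{u=k}^{k'−1} ε(c_u,c_{u+1})` for `k ≤ k'` and `Δ(k,k') = −Δ(k',k)` else. -/
noncomputable def Del {C : Type*} (ε : C → C → ℤ) (c : ℤ → C) (k k' : ℤ) : ℤ :=
  (∑ u ∈ Finset.Ico k k', ε (c u) (c (u + 1))) -
    ∑ u ∈ Finset.Ico k' k, ε (c u) (c (u + 1))

/-- `β(k,k') = |[k,k') ∩ J|` for `k ≤ k'` and `β(k,k') = −β(k',k)` otherwise. -/
noncomputable def Bet (J : Finset ℤ) (k k' : ℤ) : ℤ :=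
  ((Finset.Ico k k' ∩ J).card : ℤ) - ((Finset.Ico k' k ∩ J).card : ℤ)

/-- The function `ψ(j,i) = l_j − l_i − Δ(j,i)` from Proposition 4.10. -/
noncomputable def Psi {C : Type*} (ε : C → C → ℤ) (c : ℤ → C) (l : ℤ → ℤ) (j i : ℤ) : ℤ :=
  l j - l i - Del ε c j i

/-!
Normalising by `Δ` turns `ψ(j,i)` into `g(j) − g(i)` with `g(k) = l_k + Δ(0,k)`. Walk along the
particles of `ν`, attaching to the particle that starts at position `k` its potential `p_k`
(`l_k`, or `2 l_{k+1} + ε(c_k,c_{k+1})` for a secondary particle). Each relation `≫_ε` between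
consecutive particles says that `p_k + Δ(0,k)` does not increase, and strictly decreases when the
next particle is primary; on `J` this quantity is `g`, which gives the first claim. For the second
claim, `⌊(p_k + Δ(0,k) + Δ(0,k+1)) / 2⌋` does not increase either, and on `I` it equals `g`.
-/

section Del

variable {C : Type*} (ε : C → C → ℤ) (c : ℤ → C)

theorem Del_add_one (a b : ℤ) : Del ε c a (b + 1) = Del ε c a b + ε (c b) (c (b + 1)) := by
  unfold Del
  rcases le_or_gt a b with hab | hba
  · rw [Finset.Ico_eq_empty_of_le (by omega : a ≤ b + 1), Finset.Ico_eq_empty_of_le hab,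
      ← Finset.insert_Ico_right_eq_Ico_add_one hab, Finset.sum_insert (by simp)]
    ring
  · rw [Finset.Ico_eq_empty_of_le (by omega : b + 1 ≤ a), Finset.Ico_eq_empty_of_le hba.le,
      ← Finset.insert_Ico_add_one_left_eq_Ico hba, Finset.sum_insert (by simp)]
    ring

theorem Del_add_Del (a b d : ℤ) : Del ε c a b + Del ε c b d = Del ε c a d := by
  induction d using Int.inductionOn' (b := b) with
  | zero => simp [Del]
  | succ d _ ih => rw [Del_add_one, Del_add_one, ← ih]; ring
  | pred d _ ih =>
    have h₁ := Del_add_one ε c a (d - 1)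
    have h₂ := Del_add_one ε c b (d - 1)
    rw [sub_add_cancel] at h₁ h₂
    linarith

theorem Psi_eq_sub (l : ℤ → ℤ) (a j i : ℤ) :
    Psi ε c l j i = (l j + Del ε c a j) - (l i + Del ε c a i) := by
  have := Del_add_Del ε c a j i
  unfold Psi
  linarith

end Del

section Chain

variable {α : Type*} [Preorder α] {S : Set ℤ} (next : ℤ → ℤ) {f : ℤ → α}

theorem le_of_chain (hnext : ∀ k ∈ S, ∀ k' ∈ S, k < k' → next k ∈ S ∧ k < next k ∧ next k ≤ k')
    (hstep : ∀ k ∈ S, next k ∈ S → f (next k) ≤ f k) {k k' : ℤ} (hk : k ∈ S) (hk' : k' ∈ S)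
    (hkk' : k ≤ k') : f k' ≤ f k := by
  induction h : (k' - k).toNat using Nat.strong_induction_on generalizing k with
  | _ n ih =>
    rcases hkk'.eq_or_lt with rfl | hlt
    · rfl
    obtain ⟨hnS, hlt', hle⟩ := hnext k hk k' hk' hlt
    exact (ih _ (by omega) hnS hle rfl).trans (hstep k hk hnS)

theorem lt_of_chain {T : Set ℤ}
    (hnext : ∀ k ∈ S, ∀ k' ∈ S, k < k' → next k ∈ S ∧ k < next k ∧ next k ≤ k')
    (hTS : T ⊆ S) (hstep : ∀ k ∈ S, next k ∈ S → f (next k) ≤ f k)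
    (hstep_lt : ∀ k ∈ S, next k ∈ T → f (next k) < f k) {k k' : ℤ} (hk : k ∈ S) (hk' : k' ∈ T)
    (hkk' : k < k') : f k' < f k := by
  induction h : (k' - k).toNat using Nat.strong_induction_on generalizing k with
  | _ n ih =>
    obtain ⟨hnS, hlt', hle⟩ := hnext k hk k' (hTS hk') hkk'
    rcases hle.eq_or_lt with heq | hlt
    · exact heq ▸ hstep_lt k hk (heq ▸ hk')
    · exact (ih _ (by omega) hnS hlt rfl).trans_le (hstep k hk hnS)

end Chain

section Particles

variable {C : Type*} (ε : C → C → ℤ) (c : ℤ → C) (l : ℤ → ℤ) (I : Finset ℤ)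

/-- The particle starting at `k` is secondary, occupying `k` and `k + 1`, iff `k ∈ I`. -/
def nextStart (k : ℤ) : ℤ := if k ∈ I then k + 2 else k + 1

def potential (k : ℤ) : ℤ := if k ∈ I then 2 * l (k + 1) + ε (c k) (c (k + 1)) else l k

noncomputable def normPotential (k : ℤ) : ℤ := potential ε c l I k + Del ε c 0 k

/-- An `I ∋ i → i + 2 ∈ J` step may raise `normPotential + Δ(0, ·+1)` by one, but that quantity
is even on `I`, so its floor half does not increase. -/
noncomputable def meanPotential (k : ℤ) : ℤ := (normPotential ε c l I k + Del ε c 0 (k + 1)) / 2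

variable {ε c l I}

theorem mem_or_sub_one_mem_or_mem {J : Finset ℤ} {s : ℤ}
    (hu : I ∪ I.image (· + 1) ∪ J = Finset.Icc 1 s) {x : ℤ} (h₁ : 1 ≤ x) (h₂ : x ≤ s) :
    x ∈ I ∨ x - 1 ∈ I ∨ x ∈ J := by
  have hx : x ∈ I ∪ I.image (· + 1) ∪ J := hu ▸ Finset.mem_Icc.2 ⟨h₁, h₂⟩
  simp only [Finset.mem_union, Finset.mem_image] at hx
  rcases hx with (h | ⟨y, hy, rfl⟩) | h
  · exact Or.inl h
  · exact Or.inr (Or.inl (by simpa using hy))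
  · exact Or.inr (Or.inr h)

theorem nextStart_mem_of_lt {J : Finset ℤ} {s : ℤ} (hd1 : Disjoint I (I.image (· + 1)))
    (hd3 : Disjoint (I.image (· + 1)) J)
    (hu : I ∪ I.image (· + 1) ∪ J = Finset.Icc 1 s) {k k' : ℤ} (hk : k ∈ I ∪ J)
    (hk' : k' ∈ I ∪ J) (hkk' : k < k') :
    nextStart I k ∈ I ∪ J ∧ k < nextStart I k ∧ nextStart I k ≤ k' := by
  have mem_Icc : ∀ {x}, x ∈ I ∪ J → 1 ≤ x ∧ x ≤ s := fun hx => by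
    rw [← Finset.mem_Icc, ← hu]
    rcases Finset.mem_union.1 hx with h | h <;> simp [h]
  have hk₁ := mem_Icc hk
  have hk'₁ := mem_Icc hk'
  unfold nextStart
  split_ifs with hkI
  · have hk1 : k + 1 ∉ I ∪ J := by
      have : k + 1 ∈ I.image (· + 1) := Finset.mem_image_of_mem _ hkI
      rw [Finset.mem_union, not_or]
      exact ⟨Finset.disjoint_right.1 hd1 this, Finset.disjoint_left.1 hd3 this⟩
    have hk2 : k + 2 ≤ k' := by
      rcases (show k' = k + 1 ∨ k + 2 ≤ k' by omega) with rfl | h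
      · exact absurd hk' hk1
      · exact h
    refine ⟨?_, by omega, hk2⟩
    rcases mem_or_sub_one_mem_or_mem hu (x := k + 2) (by omega) (by omega) with h | h | h
    · exact Finset.mem_union_left _ h
    · exact absurd (Finset.mem_union_left _ (by simpa [add_sub_assoc] using h)) hk1
    · exact Finset.mem_union_right _ h
  · refine ⟨?_, by omega, by omega⟩
    rcases mem_or_sub_one_mem_or_mem hu (x := k + 1) (by omega) (by omega) with h | h | h
    · exact Finset.mem_union_left _ h
    · exact absurd (by simpa using h) hkI
    · exact Finset.mem_union_right _ h

theorem normPotential_of_not_mem {k : ℤ} (hk : k ∉ I) :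
    normPotential ε c l I k = l k + Del ε c 0 k := by
  simp [normPotential, potential, hk]

theorem meanPotential_of_mem {i : ℤ} (hi : i ∈ I) (hupper : l i = l (i + 1) + ε (c i) (c (i + 1))) :
    meanPotential ε c l I i = l i + Del ε c 0 i := by
  simp only [meanPotential, normPotential, potential, hi, if_true, Del_add_one]
  omega

theorem potential_nextStart_le {J : Finset ℤ} (hε : ∀ c c', ε c c' = 0 ∨ ε c c' = 1)
    (hd2 : Disjoint I J)
    (hJJ : ∀ k, k ∈ J → k + 1 ∈ J →
      ε (c k) (c (k + 1)) < l k - l (k + 1))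
    (hJI : ∀ k, k ∈ J → k + 1 ∈ I →
      ε (c k) (c (k + 1)) + ε (c (k + 1)) (c (k + 2)) ≤
        l k - (2 * l (k + 2) + ε (c (k + 1)) (c (k + 2))))
    (hIJ : ∀ i ∈ I, i + 2 ∈ J →
      ε (c i) (c (i + 1)) + ε (c (i + 1)) (c (i + 2)) <
        (2 * l (i + 1) + ε (c i) (c (i + 1))) - l (i + 2))
    (hII : ∀ i ∈ I, i + 2 ∈ I →
      ε (c (i + 1)) (c (i + 2)) + ε (c (i + 2)) (c (i + 3)) ≤ l (i + 1) - l (i + 3))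
    {k : ℤ} (hk : k ∈ I ∪ J) (hn : nextStart I k ∈ I ∪ J) :
    normPotential ε c l I (nextStart I k) ≤ normPotential ε c l I k ∧
      (nextStart I k ∈ J → normPotential ε c l I (nextStart I k) < normPotential ε c l I k) ∧
      meanPotential ε c l I (nextStart I k) ≤ meanPotential ε c l I k := by
  have hε01 : ∀ u, 0 ≤ ε (c u) (c (u + 1)) ∧ ε (c u) (c (u + 1)) ≤ 1 := fun u => by
    rcases hε (c u) (c (u + 1)) with h | h <;> omega
  have e₀ := hε01 k
  have e₁ := hε01 (k + 1)
  have e₂ := hε01 (k + 2)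
  have D₁ := Del_add_one ε c 0 k
  have D₂ := Del_add_one ε c 0 (k + 1)
  have D₃ := Del_add_one ε c 0 (k + 2)
  have hJ : ∀ {x}, x ∈ J → x ∉ I := fun hx hxI => Finset.disjoint_left.1 hd2 hxI hx
  have hI : ∀ {x}, x ∈ I → x ∉ J := fun hx => Finset.disjoint_left.1 hd2 hx
  simp only [show k + 1 + 1 = k + 2 by ring, show k + 2 + 1 = k + 3 by ring] at e₁ e₂ D₂ D₃
  unfold meanPotential normPotential potential nextStart at *
  rcases Finset.mem_union.1 hk with hkI | hkJ
  · simp only [hkI, if_true, show k + 2 + 1 = k + 3 by ring] at hn ⊢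
    rcases Finset.mem_union.1 hn with hnI | hnJ
    · have := hII k hkI hnI
      simp only [hnI, if_true, hI hnI, false_imp_iff, true_and]
      omega
    · have := hIJ k hkI hnJ
      simp only [hJ hnJ, if_false, hnJ, forall_const]
      omega
  · simp only [hJ hkJ, if_false, show k + 1 + 1 = k + 2 by ring] at hn ⊢
    rcases Finset.mem_union.1 hn with hnI | hnJ
    · have := hJI k hkJ hnI
      simp only [hnI, if_true, hI hnI, false_imp_iff, true_and]
      omega
    · have := hJJ k hkJ hnJ
      simp only [hJ hnJ, if_false, hnJ, forall_const]
      omega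

end Particles

/-- In the proof of Proposition 4.10: `ψ` is strictly decreasing in its first argument
on `J` and non-decreasing in its second argument on `I`. -/
theorem statement17 {C : Type*} (ε : C → C → ℤ)
    (hε : ∀ c c', ε c c' = 0 ∨ ε c c' = 1)
    (s : ℤ) (l : ℤ → ℤ) (c : ℤ → C) (I J : Finset ℤ)
    (hd1 : Disjoint I (I.image (· + 1))) (hd2 : Disjoint I J)
    (hd3 : Disjoint (I.image (· + 1)) J)
    (hu : I ∪ I.image (· + 1) ∪ J = Finset.Icc 1 s)
    (hupper : ∀ i ∈ I, l i = l (i + 1) + ε (c i) (c (i + 1)))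
    (hJJ : ∀ k, k ∈ J → k + 1 ∈ J →
      ε (c k) (c (k + 1)) < l k - l (k + 1))
    (hJI : ∀ k, k ∈ J → k + 1 ∈ I →
      ε (c k) (c (k + 1)) + ε (c (k + 1)) (c (k + 2)) ≤
        l k - (2 * l (k + 2) + ε (c (k + 1)) (c (k + 2))))
    (hIJ : ∀ i ∈ I, i + 2 ∈ J →
      ε (c i) (c (i + 1)) + ε (c (i + 1)) (c (i + 2)) <
        (2 * l (i + 1) + ε (c i) (c (i + 1))) - l (i + 2))
    (hII : ∀ i ∈ I, i + 2 ∈ I →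
      ε (c (i + 1)) (c (i + 2)) + ε (c (i + 2)) (c (i + 3)) ≤ l (i + 1) - l (i + 3))
    :
    (∀ j ∈ J, ∀ j' ∈ J, j < j' → ∀ i ∈ I, Psi ε c l j' i < Psi ε c l j i) ∧
    (∀ j ∈ J, ∀ i ∈ I, ∀ i' ∈ I, i < i' → Psi ε c l j i ≤ Psi ε c l j i') := by
  have hnext : ∀ k ∈ (↑(I ∪ J) : Set ℤ), ∀ k' ∈ (↑(I ∪ J) : Set ℤ), k < k' →
      nextStart I k ∈ (↑(I ∪ J) : Set ℤ) ∧ k < nextStart I k ∧ nextStart I k ≤ k' :=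
    fun k hk k' hk' => nextStart_mem_of_lt hd1 hd3 hu hk hk'
  have hstep := fun k (hk : k ∈ I ∪ J) => potential_nextStart_le hε hd2 hJJ hJI hIJ hII hk
  have hJ : ∀ {j}, j ∈ J → j ∉ I := fun hj hjI => Finset.disjoint_left.1 hd2 hjI hj
  refine ⟨fun j hj j' hj' hjj' i _ => ?_, fun j _ i hi i' hi' hii' => ?_⟩
  · have := lt_of_chain (nextStart I) (T := ↑J) hnext (by simp)
      (fun k hk hn => (hstep k hk hn).1)
      (fun k hk hn => (hstep k hk (Finset.mem_union_right _ hn)).2.1 hn)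
      (Finset.mem_union_right _ hj) hj' hjj'
    rw [normPotential_of_not_mem (hJ hj), normPotential_of_not_mem (hJ hj')] at this
    rw [Psi_eq_sub ε c l 0, Psi_eq_sub ε c l 0]
    linarith
  · have := le_of_chain (nextStart I) hnext (fun k hk hn => (hstep k hk hn).2.2)
      (Finset.mem_union_left _ hi) (Finset.mem_union_left _ hi') hii'.le
    rw [meanPotential_of_mem hi (hupper i hi), meanPotential_of_mem hi' (hupper i' hi')] at this
    rw [Psi_eq_sub ε c l 0, Psi_eq_sub ε c l 0]
    linarith
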